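/- Let q ∈ (0,∞), let (X,ρ,μ) be a space of homogeneous type satisfying the weak reverse doubling (WRD) condition, and let Ω ⊆ X be a measurable set satisfying the weak measure density (WMD) condition. Then there exists a positive constant C such that for every x ∈ Ω, liminf_{s→0⁺} s·∫_{Ω∖B(x,s^{−1/q})} 1/(U(x,y)·ρ(x,y)^{sq}) dμ(y) ≥ C. -/

import Mathlib

/-!
By the quasi-triangle inequality and doubling, the WRD and WMD conditions at their base points
transfer to every `x`, with constants independent of `x`: for all large `r`,
`μ(B(x,r)) ≤ γ μ(B(x,Λr))` and `2γ μ(B(x,r)) ≤ μ(B(x,r) ∩ Ω)`. Hence each annulus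
`(B(x,Λ^{j+1}R) \ B(x,Λ^j R)) ∩ Ω` has measure at least `γ μ(B(x,Λ^{j+1}R))`, while on it the
integrand is at least `1 / (μ(B(x,Λ^{j+1}R)) (Λ^{j+1}R)^{sq})` since `U(x,y) ≤ μ(B(x,ρ(x,y)))`.
Summing over `n = ⌈1/s⌉` annuli with `R = s^{-1/q}` gives
`s ∫ ≥ s n γ Λ^{-nsq} R^{-sq} ≥ γ Λ^{-2q} s^s` (as `1 ≤ ns ≤ 2`), and `s^s → 1` as `s → 0⁺`.
-/

noncomputable section

open MeasureTheory Filter Set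
open scoped ENNReal NNReal Topology

namespace Paper

variable {X : Type*} [MeasurableSpace X]

/-- The ball with center `x` and radius `r` for the quasi-metric `ρ`. -/
def ball (ρ : X → X → ℝ) (x : X) (r : ℝ) : Set X := {y | ρ x y < r}

/-- `(X, ρ, μ)` is a quasi-metric measure space with quasi-triangle constant `K₀`:
`ρ` is a quasi-metric with constant `K₀` and all `ρ`-balls are `μ`-measurable. -/
structure IsQuasiMetricMeasure (ρ : X → X → ℝ) (μ : Measure X) (K₀ : ℝ) : Prop where
  nonneg : ∀ x y, 0 ≤ ρ x y
  eq_zero_iff : ∀ x y, ρ x y = 0 ↔ x = y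
  symm : ∀ x y, ρ x y = ρ y x
  one_le : 1 ≤ K₀
  triangle : ∀ x y z, ρ x z ≤ K₀ * (ρ x y + ρ y z)
  measurableSet_ball : ∀ x r, MeasurableSet (ball ρ x r)

/-- The doubling condition for `μ` with doubling constant `L ∈ [1, ∞)`:
`0 < μ(B(x,2r)) ≤ L · μ(B(x,r)) < ∞` for all `x` and `r > 0`. -/
def IsDoubling (ρ : X → X → ℝ) (μ : Measure X) (L : ℝ≥0∞) : Prop :=
  1 ≤ L ∧ L < ∞ ∧ ∀ (x : X) (r : ℝ), 0 < r →
    0 < μ (ball ρ x r) ∧ μ (ball ρ x (2 * r)) ≤ L * μ (ball ρ x r) ∧ μ (ball ρ x r) < ∞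

/-- `U(x,y) := min{μ(B(x,ρ(x,y))), μ(B(y,ρ(x,y)))}`. -/
def U (ρ : X → X → ℝ) (μ : Measure X) (x y : X) : ℝ≥0∞ :=
  min (μ (ball ρ x (ρ x y))) (μ (ball ρ y (ρ x y)))

/-- The weak reverse doubling (WRD) condition. -/
def WRD (ρ : X → X → ℝ) (μ : Measure X) : Prop :=
  ∃ (x₀ : X) (lam C : ℝ), 1 < lam ∧ 1 < C ∧
    ENNReal.ofReal C ≤
      liminf (fun r : ℝ => μ (ball ρ x₀ (lam * r)) / μ (ball ρ x₀ r)) atTop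

/-- The weak measure density (WMD) condition for `Ω`. -/
def WMD (ρ : X → X → ℝ) (μ : Measure X) (Ω : Set X) : Prop :=
  ∃ (x₀ : X) (C₀ : ℝ), 0 < C₀ ∧ C₀ ≤ 1 ∧
    ENNReal.ofReal C₀ ≤
      liminf (fun r : ℝ => μ (ball ρ x₀ r ∩ Ω) / μ (ball ρ x₀ r)) atTop

lemma eventually_mul_le_of_lt_liminf_div {α : Type*} {l : Filter α} {f g : α → ℝ≥0∞}
    {c : ℝ≥0∞} (hc : c < liminf (fun a => f a / g a) l) (hg : ∀ᶠ a in l, g a ≠ 0 ∧ g a ≠ ∞) :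
    ∀ᶠ a in l, c * g a ≤ f a := by
  filter_upwards [eventually_lt_of_lt_liminf hc, hg] with a ha ⟨hg0, hgtop⟩
  exact (ENNReal.le_div_iff_mul_le (Or.inl hg0) (Or.inl hgtop)).1 ha.le

lemma eventually_pow_mul_le_of_eventually_mul_le {f : ℝ → ℝ≥0∞} {c : ℝ≥0∞} {a : ℝ}
    (ha : 0 < a) (h : ∀ᶠ r in atTop, c * f r ≤ f (a * r)) (k : ℕ) :
    ∀ᶠ r in atTop, c ^ k * f r ≤ f (a ^ k * r) := by
  induction k with
  | zero => simp
  | succ k ih =>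
    filter_upwards [ih, (tendsto_id.const_mul_atTop (pow_pos ha k)).eventually h]
      with r hk hstep
    calc c ^ (k + 1) * f r = c * (c ^ k * f r) := by ring
      _ ≤ c * f (a ^ k * r) := by gcongr
      _ ≤ f (a * (a ^ k * r)) := hstep
      _ = f (a ^ (k + 1) * r) := by ring_nf

lemma le_measure_diff_inter {α : Type*} [MeasurableSpace α] {μ : Measure α} {A B Ω : Set α}
    {γ : ℝ≥0∞} (hγ : γ ≠ ∞) (hB : μ B ≠ ∞) (hΩ : 2 * γ * μ B ≤ μ (B ∩ Ω))
    (hA : μ A ≤ γ * μ B) : γ * μ B ≤ μ (B \ A ∩ Ω) := by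
  have hcover : B ∩ Ω ⊆ (B \ A ∩ Ω) ∪ A := by
    rintro y ⟨hyB, hyΩ⟩
    by_cases hyA : y ∈ A
    · exact Or.inr hyA
    · exact Or.inl ⟨⟨hyB, hyA⟩, hyΩ⟩
  refine (ENNReal.add_le_add_iff_right (ENNReal.mul_ne_top hγ hB)).1 ?_
  calc γ * μ B + γ * μ B = 2 * γ * μ B := by ring
    _ ≤ μ (B ∩ Ω) := hΩ
    _ ≤ μ (B \ A ∩ Ω) + μ A := (measure_mono hcover).trans (measure_union_le _ _)
    _ ≤ μ (B \ A ∩ Ω) + γ * μ B := by gcongr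

lemma tendsto_rpow_self_nhdsGT_zero : Tendsto (fun s : ℝ => s ^ s) (𝓝[>] 0) (𝓝 1) := by
  have hlog : Tendsto (fun s : ℝ => Real.log s * s) (𝓝[>] 0) (𝓝 0) := by
    simpa using tendsto_log_mul_rpow_nhdsGT_zero one_pos
  have h := (Real.continuous_exp.tendsto 0).comp hlog
  rw [Real.exp_zero] at h
  refine h.congr' ?_
  filter_upwards [self_mem_nhdsWithin] with s hs
  rw [Function.comp_apply, Real.rpow_def_of_pos hs]

lemma rpow_neg_two_mul_div_two_le {Λ q s : ℝ} (hΛ : 1 ≤ Λ) (hq : 0 < q) (hs : 0 < s) {n : ℕ}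
    (hn₁ : 1 ≤ n * s) (hn₂ : n * s ≤ 2) (hss : 1 / 2 ≤ s ^ s) :
    Λ ^ (-(2 * q)) / 2 ≤ s * n * ((Λ ^ n * s ^ (-(1 / q))) ^ (s * q))⁻¹ := by
  have hΛ₀ : 0 < Λ := by linarith
  have hpow : (Λ ^ n * s ^ (-(1 / q))) ^ (s * q) = Λ ^ (n * s * q) * (s ^ s)⁻¹ := by
    rw [Real.mul_rpow (by positivity) (by positivity), ← Real.rpow_natCast,
      ← Real.rpow_mul hΛ₀.le, ← Real.rpow_mul hs.le, ← Real.rpow_neg hs.le, mul_assoc]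
    congr 2
    field_simp
  have hexp : Λ ^ (-(2 * q)) ≤ (Λ ^ (n * s * q))⁻¹ := by
    rw [← Real.rpow_neg hΛ₀.le]
    exact Real.rpow_le_rpow_of_exponent_le hΛ (by nlinarith)
  rw [hpow, mul_inv, inv_inv]
  calc Λ ^ (-(2 * q)) / 2 = 1 * Λ ^ (-(2 * q)) * (1 / 2) := by ring
    _ ≤ (n * s) * (Λ ^ (n * s * q))⁻¹ * s ^ s := by gcongr
    _ = s * n * ((Λ ^ (n * s * q))⁻¹ * s ^ s) := by ring

section QuasiMetric

variable {ρ : X → X → ℝ} {μ : Measure X} {K₀ : ℝ} {L : ℝ≥0∞}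

omit [MeasurableSpace X] in
lemma ball_mono (x : X) {r t : ℝ} (h : r ≤ t) : ball ρ x r ⊆ ball ρ x t :=
  fun _ hy => lt_of_lt_of_le hy h

lemma IsQuasiMetricMeasure.ball_subset_ball_two_mul (hX : IsQuasiMetricMeasure ρ μ K₀)
    {x z : X} {r : ℝ} (h : ρ x z ≤ r) : ball ρ z r ⊆ ball ρ x (2 * K₀ * r) := by
  intro y (hy : ρ z y < r)
  have hK₀ : 0 < K₀ := one_pos.trans_le hX.one_le
  calc ρ x y ≤ K₀ * (ρ x z + ρ z y) := hX.triangle x z y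
    _ < K₀ * (r + r) := mul_lt_mul_of_pos_left (add_lt_add_of_le_of_lt h hy) hK₀
    _ = 2 * K₀ * r := by ring

lemma IsDoubling.measure_ball_ne_zero (hL : IsDoubling ρ μ L) (x : X) {r : ℝ} (hr : 0 < r) :
    μ (ball ρ x r) ≠ 0 :=
  (hL.2.2 x r hr).1.ne'

lemma IsDoubling.measure_ball_ne_top (hL : IsDoubling ρ μ L) (x : X) {r : ℝ} (hr : 0 < r) :
    μ (ball ρ x r) ≠ ∞ :=
  (hL.2.2 x r hr).2.2.ne

lemma IsDoubling.measure_ball_two_pow_mul_le (hL : IsDoubling ρ μ L) (x : X) {r : ℝ}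
    (hr : 0 < r) (k : ℕ) : μ (ball ρ x (2 ^ k * r)) ≤ L ^ k * μ (ball ρ x r) := by
  induction k with
  | zero => simp
  | succ k ih =>
    calc μ (ball ρ x (2 ^ (k + 1) * r)) = μ (ball ρ x (2 * (2 ^ k * r))) := by ring_nf
      _ ≤ L * μ (ball ρ x (2 ^ k * r)) := (hL.2.2 x _ (by positivity)).2.1
      _ ≤ L * (L ^ k * μ (ball ρ x r)) := by gcongr
      _ = L ^ (k + 1) * μ (ball ρ x r) := by ring

lemma IsDoubling.exists_measure_ball_mul_le (hL : IsDoubling ρ μ L) (a : ℝ) :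
    ∃ D : ℝ≥0∞, D ≠ 0 ∧ D ≠ ∞ ∧
      ∀ x r, 0 < r → μ (ball ρ x (a * r)) ≤ D * μ (ball ρ x r) := by
  obtain ⟨k, hk⟩ := pow_unbounded_of_one_lt a one_lt_two
  refine ⟨L ^ k, pow_ne_zero k (zero_lt_one.trans_le hL.1).ne', ENNReal.pow_ne_top hL.2.1.ne,
    fun x r hr => ?_⟩
  exact (measure_mono (ball_mono x (by gcongr))).trans (hL.measure_ball_two_pow_mul_le x hr k)

lemma IsDoubling.eventually_measure_ball_ne_zero_ne_top (hL : IsDoubling ρ μ L) (x : X) :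
    ∀ᶠ r in atTop, μ (ball ρ x r) ≠ 0 ∧ μ (ball ρ x r) ≠ ∞ := by
  filter_upwards [eventually_gt_atTop 0] with r hr
  exact ⟨hL.measure_ball_ne_zero x hr, hL.measure_ball_ne_top x hr⟩

lemma WRD.exists_eventually_measure_ball_le (hL : IsDoubling ρ μ L) (hWRD : WRD ρ μ)
    {γ : ℝ≥0∞} (hγ₀ : γ ≠ 0) (hγ : γ ≠ ∞) :
    ∃ x₀ : X, ∃ a : ℝ, 1 ≤ a ∧ ∀ᶠ r in atTop, μ (ball ρ x₀ r) ≤ γ * μ (ball ρ x₀ (a * r)) := by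
  obtain ⟨x₀, lam, C, hlam, hC, hlim⟩ := hWRD
  obtain ⟨c, hc₁, hc⟩ := exists_between ((ENNReal.one_lt_ofReal.2 hC).trans_le hlim)
  have hstep := eventually_mul_le_of_lt_liminf_div hc (hL.eventually_measure_ball_ne_zero_ne_top x₀)
  obtain ⟨M, hM⟩ := ((ENNReal.tendsto_pow_atTop_nhds_top_iff.2 hc₁).eventually
    (eventually_gt_nhds (ENNReal.inv_ne_top.2 hγ₀).lt_top)).exists
  refine ⟨x₀, lam ^ M, one_le_pow₀ hlam.le, ?_⟩
  filter_upwards [eventually_pow_mul_le_of_eventually_mul_le (by linarith) hstep M] with r hr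
  calc μ (ball ρ x₀ r) = γ * (γ⁻¹ * μ (ball ρ x₀ r)) := by
        rw [← mul_assoc, ENNReal.mul_inv_cancel hγ₀ hγ, one_mul]
    _ ≤ γ * (c ^ M * μ (ball ρ x₀ r)) := by gcongr
    _ ≤ γ * μ (ball ρ x₀ (lam ^ M * r)) := by gcongr

lemma IsQuasiMetricMeasure.eventually_measure_ball_le_of_eventually
    (hX : IsQuasiMetricMeasure ρ μ K₀) {x₀ : X} {a : ℝ} (ha : 0 < a) {γ : ℝ≥0∞}
    (h₀ : ∀ᶠ r in atTop, μ (ball ρ x₀ r) ≤ γ * μ (ball ρ x₀ (a * r))) (x : X) :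
    ∀ᶠ r in atTop, μ (ball ρ x r) ≤ γ * μ (ball ρ x (4 * K₀ ^ 2 * a * r)) := by
  have hK : 0 < 2 * K₀ := by linarith [hX.one_le]
  filter_upwards [(tendsto_id.const_mul_atTop hK).eventually h₀,
    eventually_ge_atTop (ρ x₀ x), eventually_ge_atTop (ρ x x₀ / (a * (2 * K₀)))]
    with r hr hr₀ hr₁
  have hr₁' : ρ x x₀ ≤ a * (2 * K₀ * r) := by
    rw [div_le_iff₀ (by positivity)] at hr₁; linarith
  calc μ (ball ρ x r) ≤ μ (ball ρ x₀ (2 * K₀ * r)) :=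
        measure_mono (hX.ball_subset_ball_two_mul hr₀)
    _ ≤ γ * μ (ball ρ x₀ (a * (2 * K₀ * r))) := hr
    _ ≤ γ * μ (ball ρ x (2 * K₀ * (a * (2 * K₀ * r)))) := by
        gcongr; exact hX.ball_subset_ball_two_mul hr₁'
    _ = γ * μ (ball ρ x (4 * K₀ ^ 2 * a * r)) := by ring_nf

lemma WRD.exists_forall_eventually_measure_ball_le (hX : IsQuasiMetricMeasure ρ μ K₀)
    (hL : IsDoubling ρ μ L) (hWRD : WRD ρ μ) {γ : ℝ≥0∞} (hγ₀ : γ ≠ 0) (hγ : γ ≠ ∞) :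
    ∃ Λ : ℝ, 1 ≤ Λ ∧ ∀ x, ∀ᶠ r in atTop, μ (ball ρ x r) ≤ γ * μ (ball ρ x (Λ * r)) := by
  obtain ⟨x₀, a, ha, h₀⟩ := hWRD.exists_eventually_measure_ball_le hL hγ₀ hγ
  refine ⟨4 * K₀ ^ 2 * a, ?_, hX.eventually_measure_ball_le_of_eventually (by linarith) h₀⟩
  nlinarith [hX.one_le]

lemma WMD.exists_eventually_le_measure_inter {Ω : Set X} (hL : IsDoubling ρ μ L)
    (hWMD : WMD ρ μ Ω) :
    ∃ x₀ : X, ∃ c : ℝ≥0∞, c ≠ 0 ∧ c ≠ ∞ ∧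
      ∀ᶠ r in atTop, c * μ (ball ρ x₀ r) ≤ μ (ball ρ x₀ r ∩ Ω) := by
  obtain ⟨x₀, C₀, hC₀, -, hlim⟩ := hWMD
  obtain ⟨c, hc₀, hc⟩ := exists_between ((ENNReal.ofReal_pos.2 hC₀).trans_le hlim)
  exact ⟨x₀, c, hc₀.ne', hc.ne_top,
    eventually_mul_le_of_lt_liminf_div hc (hL.eventually_measure_ball_ne_zero_ne_top x₀)⟩

lemma IsQuasiMetricMeasure.eventually_le_measure_inter_of_eventually
    (hX : IsQuasiMetricMeasure ρ μ K₀) {Ω : Set X} {x₀ : X} {c D : ℝ≥0∞}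
    (h₀ : ∀ᶠ r in atTop, c * μ (ball ρ x₀ r) ≤ μ (ball ρ x₀ r ∩ Ω))
    (hD : ∀ r, 0 < r → μ (ball ρ x₀ (4 * K₀ ^ 2 * r)) ≤ D * μ (ball ρ x₀ r)) (x : X) :
    ∀ᶠ r in atTop, c * μ (ball ρ x r) ≤ D * μ (ball ρ x r ∩ Ω) := by
  have hK : 0 < 2 * K₀ := by linarith [hX.one_le]
  have ht : Tendsto (fun r : ℝ => r / (2 * K₀)) atTop atTop := tendsto_id.atTop_div_const hK
  filter_upwards [ht.eventually h₀, ht.eventually (eventually_ge_atTop (ρ x x₀)),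
    ht.eventually (eventually_gt_atTop 0), eventually_ge_atTop (ρ x₀ x)]
    with r hr hr₁ ht₀ hr₀
  set t := r / (2 * K₀)
  have hrt : 2 * K₀ * t = r := mul_div_cancel₀ r hK.ne'
  have hball : ball ρ x₀ (2 * K₀ * r) = ball ρ x₀ (4 * K₀ ^ 2 * t) := by rw [← hrt]; ring_nf
  calc c * μ (ball ρ x r) ≤ c * μ (ball ρ x₀ (2 * K₀ * r)) := by
        gcongr; exact hX.ball_subset_ball_two_mul hr₀
    _ ≤ c * (D * μ (ball ρ x₀ t)) := by rw [hball]; gcongr; exact hD t ht₀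
    _ = D * (c * μ (ball ρ x₀ t)) := by ring
    _ ≤ D * μ (ball ρ x₀ t ∩ Ω) := by gcongr
    _ ≤ D * μ (ball ρ x r ∩ Ω) := by
        gcongr; rw [← hrt]; exact hX.ball_subset_ball_two_mul hr₁

lemma WMD.exists_forall_eventually_le_measure_inter {Ω : Set X}
    (hX : IsQuasiMetricMeasure ρ μ K₀) (hL : IsDoubling ρ μ L) (hWMD : WMD ρ μ Ω) :
    ∃ c : ℝ≥0∞, c ≠ 0 ∧ c ≠ ∞ ∧
      ∀ x, ∀ᶠ r in atTop, c * μ (ball ρ x r) ≤ μ (ball ρ x r ∩ Ω) := by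
  obtain ⟨x₀, c, hc₀, hc, h₀⟩ := hWMD.exists_eventually_le_measure_inter hL
  obtain ⟨D, hD₀, hD, hDball⟩ := hL.exists_measure_ball_mul_le (4 * K₀ ^ 2)
  refine ⟨c / D, (ENNReal.div_pos_iff.2 ⟨hc₀, hD⟩).ne', ENNReal.div_ne_top hc hD₀, fun x => ?_⟩
  filter_upwards [hX.eventually_le_measure_inter_of_eventually h₀ (hDball x₀) x] with r hr
  rw [← ENNReal.mul_div_right_comm]
  exact ENNReal.div_le_of_le_mul (by rwa [mul_comm _ D])

lemma mul_inv_rpow_le_setLIntegral {A : Set X} (hA : MeasurableSet A) {x : X} {t p : ℝ}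
    (hp : 0 ≤ p) (hAt : A ⊆ ball ρ x t) {γ : ℝ≥0∞} (hμA : γ * μ (ball ρ x t) ≤ μ A)
    (h₀ : μ (ball ρ x t) ≠ 0) (htop : μ (ball ρ x t) ≠ ∞) :
    γ * (ENNReal.ofReal t ^ p)⁻¹ ≤
      ∫⁻ y in A, 1 / (U ρ μ x y * ENNReal.ofReal (ρ x y) ^ p) ∂μ := by
  have hle : ∀ y ∈ A, (μ (ball ρ x t) * ENNReal.ofReal t ^ p)⁻¹ ≤
      1 / (U ρ μ x y * ENNReal.ofReal (ρ x y) ^ p) := by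
    intro y hy
    have hyt : ρ x y ≤ t := (hAt hy).le
    rw [one_div]
    gcongr
    exact (min_le_left _ _).trans (measure_mono (ball_mono x hyt))
  calc γ * (ENNReal.ofReal t ^ p)⁻¹
      = γ * (ENNReal.ofReal t ^ p)⁻¹ * ((μ (ball ρ x t))⁻¹ * μ (ball ρ x t)) := by
        rw [ENNReal.inv_mul_cancel h₀ htop, mul_one]
    _ = (μ (ball ρ x t) * ENNReal.ofReal t ^ p)⁻¹ * (γ * μ (ball ρ x t)) := by
        rw [ENNReal.mul_inv (Or.inl h₀) (Or.inl htop)]; ring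
    _ ≤ (μ (ball ρ x t) * ENNReal.ofReal t ^ p)⁻¹ * μ A := by gcongr
    _ = ∫⁻ _ in A, (μ (ball ρ x t) * ENNReal.ofReal t ^ p)⁻¹ ∂μ := (setLIntegral_const _ _).symm
    _ ≤ ∫⁻ y in A, 1 / (U ρ μ x y * ENNReal.ofReal (ρ x y) ^ p) ∂μ := setLIntegral_mono' hA hle

lemma natCast_mul_le_setLIntegral_diff_ball (hX : IsQuasiMetricMeasure ρ μ K₀)
    (hL : IsDoubling ρ μ L) {Ω : Set X} (hΩ : MeasurableSet Ω) {x : X} {γ : ℝ≥0∞} (hγ : γ ≠ ∞)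
    {Λ R p : ℝ} (hΛ : 1 ≤ Λ) (hR : 0 < R) (hp : 0 ≤ p)
    (hdens : ∀ r, R ≤ r → 2 * γ * μ (ball ρ x r) ≤ μ (ball ρ x r ∩ Ω))
    (hrev : ∀ r, R ≤ r → μ (ball ρ x r) ≤ γ * μ (ball ρ x (Λ * r))) (n : ℕ) :
    n * (γ * (ENNReal.ofReal (Λ ^ n * R) ^ p)⁻¹) ≤
      ∫⁻ y in Ω \ ball ρ x R, 1 / (U ρ μ x y * ENNReal.ofReal (ρ x y) ^ p) ∂μ := by
  set B : ℕ → Set X := fun j => ball ρ x (Λ ^ j * R)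
  set A : ℕ → Set X := fun j => B (j + 1) \ B j ∩ Ω
  have hR_le : ∀ j : ℕ, R ≤ Λ ^ j * R := fun j => le_mul_of_one_le_left hR.le (one_le_pow₀ hΛ)
  have hB_mono : Monotone B := fun i j hij => ball_mono x (by gcongr)
  have hA_meas : ∀ j, MeasurableSet (A j) := fun j =>
    ((hX.measurableSet_ball _ _).diff (hX.measurableSet_ball _ _)).inter hΩ
  have hA_disj : Pairwise (Function.onFun Disjoint A) := (pairwise_disjoint_on A).2 fun i j hij =>
    Set.disjoint_left.2 fun y hyi hyj => hyj.1.2 (hB_mono hij hyi.1.1)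
  have hA_sub : ∀ j, A j ⊆ Ω \ ball ρ x R := fun j y hy =>
    ⟨hy.2, fun hyR => hy.1.2 (ball_mono x (hR_le j) hyR)⟩
  have hA_int : ∀ j ∈ Finset.range n, γ * (ENNReal.ofReal (Λ ^ n * R) ^ p)⁻¹ ≤
      ∫⁻ y in A j, 1 / (U ρ μ x y * ENNReal.ofReal (ρ x y) ^ p) ∂μ := by
    intro j hj
    have hpos : 0 < Λ ^ (j + 1) * R := by positivity
    have hμA : γ * μ (B (j + 1)) ≤ μ (A j) :=
      le_measure_diff_inter hγ (hL.measure_ball_ne_top x hpos) (hdens _ (hR_le _))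
        (by simpa only [B, pow_succ', mul_assoc] using hrev _ (hR_le j))
    calc γ * (ENNReal.ofReal (Λ ^ n * R) ^ p)⁻¹
        ≤ γ * (ENNReal.ofReal (Λ ^ (j + 1) * R) ^ p)⁻¹ := by
          gcongr
          exact Finset.mem_range.1 hj
      _ ≤ _ := mul_inv_rpow_le_setLIntegral (hA_meas j) hp (fun y hy => hy.1.1) hμA
          (hL.measure_ball_ne_zero x hpos) (hL.measure_ball_ne_top x hpos)
  calc (n : ℝ≥0∞) * (γ * (ENNReal.ofReal (Λ ^ n * R) ^ p)⁻¹)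
      = ∑ _j ∈ Finset.range n, γ * (ENNReal.ofReal (Λ ^ n * R) ^ p)⁻¹ := by simp
    _ ≤ ∑ j ∈ Finset.range n,
          ∫⁻ y in A j, 1 / (U ρ μ x y * ENNReal.ofReal (ρ x y) ^ p) ∂μ :=
        Finset.sum_le_sum hA_int
    _ = ∫⁻ y in ⋃ j ∈ Finset.range n, A j,
          1 / (U ρ μ x y * ENNReal.ofReal (ρ x y) ^ p) ∂μ :=
        (lintegral_biUnion_finset (hA_disj.set_pairwise _) (fun j _ => hA_meas j) _).symm
    _ ≤ _ := lintegral_mono_set (iUnion₂_subset fun j _ => hA_sub j)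

lemma eventually_le_mul_setLIntegral_diff_ball (hX : IsQuasiMetricMeasure ρ μ K₀)
    (hL : IsDoubling ρ μ L) {Ω : Set X} (hΩ : MeasurableSet Ω) {x : X} {γ : ℝ≥0∞} (hγ : γ ≠ ∞)
    {Λ q : ℝ} (hΛ : 1 ≤ Λ) (hq : 0 < q)
    (hdens : ∀ᶠ r in atTop, 2 * γ * μ (ball ρ x r) ≤ μ (ball ρ x r ∩ Ω))
    (hrev : ∀ᶠ r in atTop, μ (ball ρ x r) ≤ γ * μ (ball ρ x (Λ * r))) :
    ∀ᶠ s in 𝓝[>] (0 : ℝ), γ * ENNReal.ofReal (Λ ^ (-(2 * q)) / 2) ≤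
      ENNReal.ofReal s * ∫⁻ y in Ω \ ball ρ x (s ^ (-(1 / q))),
        1 / (U ρ μ x y * ENNReal.ofReal (ρ x y) ^ (s * q)) ∂μ := by
  obtain ⟨T, hT⟩ := eventually_atTop.1 (hdens.and hrev)
  have hR : Tendsto (fun s : ℝ => s ^ (-(1 / q))) (𝓝[>] 0) atTop :=
    tendsto_rpow_neg_nhdsGT_zero (by simpa using hq)
  filter_upwards [hR.eventually (eventually_ge_atTop T), Ioc_mem_nhdsGT one_pos,
    tendsto_rpow_self_nhdsGT_zero.eventually (eventually_ge_nhds (by norm_num : (1 : ℝ) / 2 < 1))]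
    with s hRT ⟨hs, hs₁⟩ hss
  set R := s ^ (-(1 / q))
  set n := ⌈s⁻¹⌉₊
  have hn₁ : 1 ≤ (n : ℝ) * s := (inv_le_iff_one_le_mul₀ hs).1 (Nat.le_ceil _)
  have hn₂ : (n : ℝ) * s ≤ 2 := by
    have hn : (n : ℝ) < s⁻¹ + 1 := Nat.ceil_lt_add_one (inv_nonneg.2 hs.le)
    have : (s⁻¹ + 1) * s = 1 + s := by field_simp
    nlinarith
  have hΛR : 0 < Λ ^ n * R := by positivity
  calc γ * ENNReal.ofReal (Λ ^ (-(2 * q)) / 2)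
      ≤ γ * ENNReal.ofReal (s * n * ((Λ ^ n * R) ^ (s * q))⁻¹) := by
        gcongr; exact rpow_neg_two_mul_div_two_le hΛ hq hs hn₁ hn₂ hss
    _ = ENNReal.ofReal s * (n * (γ * (ENNReal.ofReal (Λ ^ n * R) ^ (s * q))⁻¹)) := by
        rw [ENNReal.ofReal_rpow_of_nonneg hΛR.le (by positivity),
          ← ENNReal.ofReal_inv_of_pos (by positivity), ENNReal.ofReal_mul (by positivity),
          ENNReal.ofReal_mul hs.le, ENNReal.ofReal_natCast]
        ring
    _ ≤ _ := by
        gcongr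
        exact natCast_mul_le_setLIntegral_diff_ball hX hL hΩ hγ hΛ (by positivity) (by positivity)
          (fun r hr => (hT r (hRT.trans hr)).1) (fun r hr => (hT r (hRT.trans hr)).2) n

end QuasiMetric

theorem statement5 (ρ : X → X → ℝ) (μ : Measure X) (K₀ : ℝ) (L : ℝ≥0∞)
    (hX : IsQuasiMetricMeasure ρ μ K₀) (hL : IsDoubling ρ μ L) (hWRD : WRD ρ μ)
    (Ω : Set X) (hΩ : MeasurableSet Ω) (hWMD : WMD ρ μ Ω)
    (q : ℝ) (hq : 0 < q) :
    ∃ C : ℝ≥0∞, 0 < C ∧ ∀ x ∈ Ω,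
      C ≤ liminf (fun s : ℝ => ENNReal.ofReal s *
          ∫⁻ y in Ω \ ball ρ x (s ^ (-(1 / q))),
            1 / (U ρ μ x y * ENNReal.ofReal (ρ x y) ^ (s * q)) ∂μ) (𝓝[>] (0:ℝ)) := by
  obtain ⟨c, hc₀, hc, hdens⟩ := hWMD.exists_forall_eventually_le_measure_inter hX hL
  have hγ₀ : c / 2 ≠ 0 := (ENNReal.half_pos hc₀).ne'
  have hγ : c / 2 ≠ ∞ := ENNReal.div_ne_top hc two_ne_zero
  have htwo : 2 * (c / 2) = c := ENNReal.mul_div_cancel' (by simp) (by simp)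
  obtain ⟨Λ, hΛ, hrev⟩ := hWRD.exists_forall_eventually_measure_ball_le hX hL hγ₀ hγ
  refine ⟨c / 2 * ENNReal.ofReal (Λ ^ (-(2 * q)) / 2),
    ENNReal.mul_pos hγ₀ (ENNReal.ofReal_pos.2 (by positivity)).ne', fun x _ => ?_⟩
  exact le_liminf_of_le (by isBoundedDefault) <| eventually_le_mul_setLIntegral_diff_ball
    hX hL hΩ hγ hΛ hq (by simpa only [htwo] using hdens x) (hrev x)

end Paper
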